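/- arXiv:2005.06733 — 2 statements merged into one kernel-verified Lean document; each statement's English description precedes it below -/
import Mathlib

section
/- For every x ∈ ℝ³ with ‖x‖ ≤ π, the rotation error function evaluated at E = exp(hat(x)) satisfies 2 − √(1 + tr(exp(hat(x)))) = 4 · sin²(‖x‖/4). (In particular tr(exp(hat(x))) = 1 + 2 cos ‖x‖.) -/
/-!
Since `hat x ^ 3 = -‖x‖² • hat x`, the matrix `hat x` has eigenvalues `0, ±i‖x‖`, so
`tr (hat x ^ n) = 0 ^ n + (i‖x‖) ^ n + (-i‖x‖) ^ n`. Summing the exponential series termwise gives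
`tr (exp (hat x)) = 1 + 2 cos ‖x‖`, and for `‖x‖ ≤ π` the half-angle formulas turn
`2 - √(2 + 2 cos θ) = 2 - 2 cos (θ / 2)` into `4 sin² (θ / 4)`.
-/

open Matrix Real

/-- The hat map sending `x ∈ ℝ³` to the skew-symmetric matrix with `hat x *ᵥ y = x ×₃ y`. -/
def hat (x : Fin 3 → ℝ) : Matrix (Fin 3) (Fin 3) ℝ :=
  !![0, -x 2, x 1; x 2, 0, -x 0; -x 1, x 0, 0]

/-- The Euclidean norm on ℝ³. -/
noncomputable def enorm3 (x : Fin 3 → ℝ) : ℝ := Real.sqrt (∑ i, x i ^ 2)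

open Nat in
theorem Matrix.hasSum_trace_exp {m 𝕂 : Type*} [Fintype m] [DecidableEq m] [RCLike 𝕂]
    (A : Matrix m m 𝕂) : HasSum (fun n => (A ^ n).trace / n !) (NormedSpace.exp A).trace := by
  have htrace : Continuous (traceAddMonoidHom m 𝕂) := continuous_id.matrix_trace
  open scoped Norms.Operator in
  have hsum := (NormedSpace.exp_series_hasSum_exp' (𝕂 := 𝕂) A).map (traceAddMonoidHom m 𝕂) htrace
  simp only [Function.comp_def, traceAddMonoidHom_apply, trace_smul, smul_eq_mul] at hsum
  simp only [div_eq_inv_mul]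
  -- `hsum` differs from the goal only by the (defeq) operator-norm topology on matrices
  exact hsum

open Nat Complex in
theorem Real.hasSum_re_ofReal_mul_I_pow_div_factorial (θ : ℝ) :
    HasSum (fun n => ((θ * I) ^ n).re / n !) (Real.cos θ) := by
  have := hasSum_re (NormedSpace.expSeries_div_hasSum_exp (θ * I))
  simpa only [div_natCast_re, ← Complex.exp_eq_exp_ℂ, exp_ofReal_mul_I_re] using this

theorem enorm3_nonneg (x : Fin 3 → ℝ) : 0 ≤ enorm3 x :=
  Real.sqrt_nonneg _

theorem enorm3_sq (x : Fin 3 → ℝ) : enorm3 x ^ 2 = x 0 ^ 2 + x 1 ^ 2 + x 2 ^ 2 := by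
  rw [enorm3, sq_sqrt (by positivity), Fin.sum_univ_three]

theorem hat_pow_three (x : Fin 3 → ℝ) : hat x ^ 3 = -enorm3 x ^ 2 • hat x := by
  rw [enorm3_sq, pow_three]
  ext i j
  fin_cases i <;> fin_cases j <;> simp [hat, Matrix.mul_apply, Fin.sum_univ_three] <;> ring

theorem trace_hat (x : Fin 3 → ℝ) : (hat x).trace = 0 := by
  simp [hat, Matrix.trace, Fin.sum_univ_three]

theorem trace_hat_sq (x : Fin 3 → ℝ) : (hat x ^ 2).trace = -2 * enorm3 x ^ 2 := by
  rw [enorm3_sq, sq]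
  simp [hat, Matrix.trace, Fin.sum_univ_three]
  ring

open Complex in
theorem trace_hat_pow (x : Fin 3 → ℝ) :
    ∀ n : ℕ, (hat x ^ n).trace = 0 ^ n + 2 * ((enorm3 x * I) ^ n).re
  | 0 => by norm_num
  | 1 => by simp [trace_hat]
  | 2 => by simp [trace_hat_sq, mul_pow, ← ofReal_pow]
  | n + 3 => by
    have hI : (enorm3 x * I) ^ (n + 3) = ((-enorm3 x ^ 2 : ℝ) : ℂ) * (enorm3 x * I) ^ (n + 1) := by
      push_cast
      linear_combination (enorm3 x * I) ^ (n + 1) * enorm3 x ^ 2 * I_sq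
    rw [pow_add, hat_pow_three, mul_smul_comm, ← pow_succ, trace_smul, trace_hat_pow x (n + 1),
      hI, re_ofReal_mul, smul_eq_mul, zero_pow (by omega), zero_pow (by omega)]
    ring

open Nat in
theorem trace_exp_hat (x : Fin 3 → ℝ) :
    (NormedSpace.exp (hat x)).trace = 1 + 2 * cos (enorm3 x) := by
  have hone : HasSum (fun n => (0 : ℝ) ^ n / n !) 1 := by
    simpa only [← Real.exp_eq_exp_ℝ, Real.exp_zero] using
      NormedSpace.expSeries_div_hasSum_exp (0 : ℝ)
  have hseries :=
    hone.add ((Real.hasSum_re_ofReal_mul_I_pow_div_factorial (enorm3 x)).mul_left 2)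
  refine (hasSum_trace_exp (hat x)).unique ?_
  simp only [trace_hat_pow, add_div, mul_div_assoc]
  exact hseries

theorem two_sub_sqrt_two_add_two_mul_cos {θ : ℝ} (h₁ : -π ≤ θ) (h₂ : θ ≤ π) :
    2 - √(2 + 2 * cos θ) = 4 * sin (θ / 4) ^ 2 := by
  have hcos_nonneg : 0 ≤ cos (θ / 2) := cos_nonneg_of_mem_Icc ⟨by linarith, by linarith⟩
  have hsq : 2 + 2 * cos θ = (2 * cos (θ / 2)) ^ 2 := by
    rw [mul_pow, cos_sq, show 2 * (θ / 2) = θ by ring]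
    ring
  rw [hsq, sqrt_sq (by positivity), sin_sq_eq_half_sub, show 2 * (θ / 4) = θ / 2 by ring]
  ring

/-- The attitude error function of `E = exp (hat x)` equals `4 sin² (‖x‖/4)` when `‖x‖ ≤ π`;
in particular `tr (exp (hat x)) = 1 + 2 cos ‖x‖`. -/
theorem error_function_exp_hat (x : Fin 3 → ℝ) (hx : enorm3 x ≤ Real.pi) :
    (2 - Real.sqrt (1 + (NormedSpace.exp (hat x)).trace) =
        4 * Real.sin (enorm3 x / 4) ^ 2) ∧
      (NormedSpace.exp (hat x)).trace = 1 + 2 * Real.cos (enorm3 x) := by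
  refine ⟨?_, trace_exp_hat x⟩
  rw [trace_exp_hat, ← add_assoc, one_add_one_eq_two]
  exact two_sub_sqrt_two_add_two_mul_cos (by linarith [enorm3_nonneg x, Real.pi_pos]) hx
end

section
/- Let R, R_d : ℝ → Matrix (Fin 3) (Fin 3) ℝ be differentiable curves taking values in SO(3), Ω, Ω_d : ℝ → ℝ³ differentiable with R'(t) = R(t)·hat(Ω(t)), R_d'(t) = R_d(t)·hat(Ω_d(t)), and tr(R_d(t)ᵀR(t)) > −1 for all t. Let P, F be 3×3 real matrices and J an invertible 3×3 real matrix, and set Ω_tar(t) = −P · e_R(t) + R(t)ᵀR_d(t)Ω_d(t). Then Ω_tar is differentiable with Ω_tar'(t) = −hat(Ω(t)) · R(t)ᵀR_d(t)Ω_d(t) + R(t)ᵀR_d(t)Ω_d'(t) − P · β(t) · e_Ω(t); and if moreover J · Ω'(t) = −Ω(t) × (J·Ω(t)) + q(t) where q(t) = Ω(t) × (J·Ω(t)) + J · Ω_tar'(t) − F · (Ω(t) − Ω_tar(t)), then the tracking error e(t) = Ω(t) − Ω_tar(t) satisfies the linear error dynamics J · e'(t) = −F · e(t). -/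
open Matrix

/-- The vee map, inverse to `hat` on skew-symmetric matrices. -/
def vee (S : Matrix (Fin 3) (Fin 3) ℝ) : Fin 3 → ℝ :=
  ![S 2 1, S 0 2, S 1 0]

/-- The rotation error vector. -/
noncomputable def eR (R Rd : ℝ → Matrix (Fin 3) (Fin 3) ℝ) (t : ℝ) : Fin 3 → ℝ :=
  (1 / (2 * Real.sqrt (1 + ((Rd t)ᵀ * R t).trace))) •
    vee ((Rd t)ᵀ * R t - (R t)ᵀ * Rd t)

/-- The angular velocity error vector. -/
def eΩ (R Rd : ℝ → Matrix (Fin 3) (Fin 3) ℝ) (Ω Ωd : ℝ → Fin 3 → ℝ) (t : ℝ) : Fin 3 → ℝ :=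
  Ω t - ((R t)ᵀ * Rd t) *ᵥ Ωd t

/-- The matrix `β(t)` relating `e_R'` to `e_Ω`. -/
noncomputable def β (R Rd : ℝ → Matrix (Fin 3) (Fin 3) ℝ) (t : ℝ) :
    Matrix (Fin 3) (Fin 3) ℝ :=
  (1 / (2 * Real.sqrt (1 + ((Rd t)ᵀ * R t).trace))) •
    (2 • vecMulVec (eR R Rd t) (eR R Rd t) +
      ((R t)ᵀ * Rd t).trace • (1 : Matrix (Fin 3) (Fin 3) ℝ) - (R t)ᵀ * Rd t)

/-- The target angular velocity `Ω_tar(t) = -P e_R(t) + R(t)ᵀ R_d(t) Ω_d(t)`. -/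
noncomputable def Ωtar (P : Matrix (Fin 3) (Fin 3) ℝ)
    (R Rd : ℝ → Matrix (Fin 3) (Fin 3) ℝ) (Ωd : ℝ → Fin 3 → ℝ) (t : ℝ) : Fin 3 → ℝ :=
  -(P *ᵥ eR R Rd t) + ((R t)ᵀ * Rd t) *ᵥ Ωd t

/-! The relative attitude `Q = Rᵀ R_d` is a rotation with `Q' = -Ω̂ Q + Q Ω̂_d`, and
`e_R = (Qᵀ - Q)^∨ / (2 √(1 + tr Q))`. Differentiating this gives an expression in `Ω` and `Ω_d`
which collapses to `β e_Ω` by two facts about rotations: `Q` fixes its axis `(Qᵀ - Q)^∨`, and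
Cayley–Hamilton reads `Q² = (tr Q)(Q - 1) + Qᵀ` on `SO(3)`. The error dynamics is then linear
algebra: the control law cancels the gyroscopic term and `J Ω_tar'`. -/

lemma hat_mulVec_self (x : Fin 3 → ℝ) : hat x *ᵥ x = 0 := by
  ext i; fin_cases i <;> simp [hat, mulVec, dotProduct, Fin.sum_univ_three] <;> ring

lemma hat_transpose (x : Fin 3 → ℝ) : (hat x)ᵀ = -hat x := by
  ext i j; fin_cases i <;> fin_cases j <;> simp [hat]

lemma vee_hat (x : Fin 3 → ℝ) : vee (hat x) = x := by
  ext i; fin_cases i <;> simp [hat, vee]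

lemma hat_vee_transpose_sub (A : Matrix (Fin 3) (Fin 3) ℝ) : hat (vee (Aᵀ - A)) = Aᵀ - A := by
  ext i j; fin_cases i <;> fin_cases j <;> simp [hat, vee]

lemma hat_mulVec_mul (A : Matrix (Fin 3) (Fin 3) ℝ) (x : Fin 3 → ℝ) :
    hat (A *ᵥ x) * A = (adjugate A)ᵀ * hat x := by
  ext i j; fin_cases i <;> fin_cases j <;>
    simp [adjugate_fin_three, hat, mulVec, dotProduct, mul_apply, Fin.sum_univ_three] <;> ring

lemma adjugate_fin_three_eq_poly (A : Matrix (Fin 3) (Fin 3) ℝ) :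
    adjugate A = A * A - A.trace • A + ((A.trace ^ 2 - (A * A).trace) / 2) • 1 := by
  ext i j; fin_cases i <;> fin_cases j <;>
    simp [adjugate_fin_three, mul_apply, Fin.sum_univ_three, trace, one_apply] <;> ring

lemma trace_neg_hat_mul_add_mul_hat (Q : Matrix (Fin 3) (Fin 3) ℝ) (w wd : Fin 3 → ℝ) :
    (-hat w * Q + Q * hat wd).trace = vee (Qᵀ - Q) ⬝ᵥ (wd - w) := by
  simp [trace, mul_apply, Fin.sum_univ_three, hat, vee, dotProduct, vecMul]
  ring

lemma vee_neg_hat_mul_add_mul_hat (Q : Matrix (Fin 3) (Fin 3) ℝ) (w wd : Fin 3 → ℝ) :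
    vee ((-hat w * Q + Q * hat wd)ᵀ - (-hat w * Q + Q * hat wd)) =
      (Q.trace • 1 - Q) *ᵥ w - (Q.trace • 1 - Qᵀ) *ᵥ wd := by
  ext j; fin_cases j <;>
    simp [vee, hat, mul_apply, mulVec, vecMul, dotProduct, Fin.sum_univ_three, trace,
      one_apply] <;> ring

lemma adjugate_eq_transpose_of_mem_specialOrthogonalGroup {n R : Type*} [Fintype n]
    [DecidableEq n] [CommRing R] {Q : Matrix n n R} (hQ : Q ∈ specialOrthogonalGroup n R) :
    adjugate Q = Qᵀ := by
  have hQQ : Qᵀ * Q = 1 := (mem_orthogonalGroup_iff' n R).1 hQ.1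
  calc adjugate Q = Qᵀ * Q * adjugate Q := by rw [hQQ, one_mul]
    _ = Qᵀ := by rw [Matrix.mul_assoc, mul_adjugate, show Q.det = 1 from hQ.2, one_smul, mul_one]

lemma transpose_mul_mem_specialOrthogonalGroup {n R : Type*} [Fintype n] [DecidableEq n]
    [CommRing R] {A B : Matrix n n R} (hA : A ∈ specialOrthogonalGroup n R)
    (hB : B ∈ specialOrthogonalGroup n R) : Aᵀ * B ∈ specialOrthogonalGroup n R := by
  refine Submonoid.mul_mem _ ⟨(mem_orthogonalGroup_iff' n R).2 ?_, ?_⟩ hB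
  · rw [transpose_transpose]
    exact (mem_orthogonalGroup_iff n R).1 hA.1
  · show Aᵀ.det = 1
    rw [det_transpose]
    exact hA.2

section SpecialOrthogonal

variable {Q : Matrix (Fin 3) (Fin 3) ℝ}

lemma mul_self_eq_of_mem_specialOrthogonalGroup (hQ : Q ∈ specialOrthogonalGroup (Fin 3) ℝ) :
    Q * Q = Q.trace • Q - Q.trace • 1 + Qᵀ := by
  have hadj := (adjugate_eq_transpose_of_mem_specialOrthogonalGroup hQ).symm.trans
    (adjugate_fin_three_eq_poly Q)
  have hcoeff : (Q.trace ^ 2 - (Q * Q).trace) / 2 = Q.trace := by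
    have := congrArg trace hadj
    simp only [trace_transpose, trace_add, trace_sub, trace_smul, trace_one, Fintype.card_fin,
      smul_eq_mul] at this
    linarith
  rw [hcoeff] at hadj
  rw [hadj]
  abel

lemma hat_mulVec_of_mem_specialOrthogonalGroup (hQ : Q ∈ specialOrthogonalGroup (Fin 3) ℝ)
    (x : Fin 3 → ℝ) : hat (Q *ᵥ x) = Q * hat x * Qᵀ := by
  have hQQ : Q * Qᵀ = 1 := (mem_orthogonalGroup_iff (Fin 3) ℝ).1 hQ.1
  calc hat (Q *ᵥ x) = hat (Q *ᵥ x) * Q * Qᵀ := by rw [Matrix.mul_assoc, hQQ, mul_one]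
    _ = Q * hat x * Qᵀ := by
      rw [hat_mulVec_mul, adjugate_eq_transpose_of_mem_specialOrthogonalGroup hQ,
        transpose_transpose]

lemma mulVec_vee_transpose_sub_self (hQ : Q ∈ specialOrthogonalGroup (Fin 3) ℝ) :
    Q *ᵥ vee (Qᵀ - Q) = vee (Qᵀ - Q) := by
  have hQQ : Q * Qᵀ = 1 := (mem_orthogonalGroup_iff (Fin 3) ℝ).1 hQ.1
  have hconj : Q * (Qᵀ - Q) * Qᵀ = Qᵀ - Q := by
    rw [Matrix.mul_sub, Matrix.sub_mul, hQQ, one_mul, Matrix.mul_assoc Q Q, hQQ, mul_one]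
  rw [← vee_hat (Q *ᵥ _), hat_mulVec_of_mem_specialOrthogonalGroup hQ, hat_vee_transpose_sub,
    hconj]

lemma vee_transpose_sub_dotProduct_mulVec (hQ : Q ∈ specialOrthogonalGroup (Fin 3) ℝ)
    (x : Fin 3 → ℝ) : vee (Qᵀ - Q) ⬝ᵥ (Q *ᵥ x) = vee (Qᵀ - Q) ⬝ᵥ x := by
  have hQQ : Qᵀ * Q = 1 := (mem_orthogonalGroup_iff' (Fin 3) ℝ).1 hQ.1
  calc vee (Qᵀ - Q) ⬝ᵥ (Q *ᵥ x) = Qᵀ *ᵥ (Q *ᵥ vee (Qᵀ - Q)) ⬝ᵥ x := by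
        rw [dotProduct_mulVec, mulVec_transpose, mulVec_vee_transpose_sub_self hQ]
    _ = vee (Qᵀ - Q) ⬝ᵥ x := by rw [mulVec_mulVec, hQQ, one_mulVec]

end SpecialOrthogonal

/-- `e_R` as a function of the relative attitude `Q = Rᵀ R_d`. -/
noncomputable def attitudeError (Q : Matrix (Fin 3) (Fin 3) ℝ) : Fin 3 → ℝ :=
  (1 / (2 * √(1 + Q.trace))) • vee (Qᵀ - Q)

lemma eR_eq_attitudeError (R Rd : ℝ → Matrix (Fin 3) (Fin 3) ℝ) (t : ℝ) :
    eR R Rd t = attitudeError ((R t)ᵀ * Rd t) := by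
  rw [eR, attitudeError, transpose_mul, transpose_transpose, ← trace_transpose, transpose_mul,
    transpose_transpose]

/-- Up to the factor `1 / (2 √(1 + tr Q))`, the left side is the derivative of `attitudeError`
along `Q' = -ŵ Q + Q ŵ_d` (see `hasDerivAt_attitudeError`). -/
lemma vee_sub_trace_smul_vee_eq_mulVec {Q : Matrix (Fin 3) (Fin 3) ℝ}
    (hQ : Q ∈ specialOrthogonalGroup (Fin 3) ℝ) (hg : 0 < 1 + Q.trace) (w wd : Fin 3 → ℝ) :
    vee ((-hat w * Q + Q * hat wd)ᵀ - (-hat w * Q + Q * hat wd)) -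
        ((-hat w * Q + Q * hat wd).trace / (2 * (1 + Q.trace))) • vee (Qᵀ - Q) =
      (2 • vecMulVec (attitudeError Q) (attitudeError Q) + Q.trace • 1 - Q) *ᵥ
        (w - Q *ᵥ wd) := by
  rw [trace_neg_hat_mul_add_mul_hat, vee_neg_hat_mul_add_mul_hat, attitudeError]
  have hdot := vee_transpose_sub_dotProduct_mulVec hQ wd
  set u := vee (Qᵀ - Q)
  have hsqrt : √(1 + Q.trace) ^ 2 = 1 + Q.trace := Real.sq_sqrt hg.le
  have houter (x : Fin 3 → ℝ) : (2 • vecMulVec ((1 / (2 * √(1 + Q.trace))) • u)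
      ((1 / (2 * √(1 + Q.trace))) • u)) *ᵥ x = ((u ⬝ᵥ x) / (2 * (1 + Q.trace))) • u := by
    rw [smul_mulVec, vecMulVec_mulVec, op_smul_eq_smul, smul_dotProduct]
    have hs : 0 < √(1 + Q.trace) := Real.sqrt_pos.2 hg
    match_scalars
    simp only [smul_eq_mul]
    field_simp
    rw [hsqrt]
  have hsq : Q *ᵥ (Q *ᵥ wd) = Q.trace • (Q *ᵥ wd) - Q.trace • wd + Qᵀ *ᵥ wd := by
    rw [mulVec_mulVec, mul_self_eq_of_mem_specialOrthogonalGroup hQ, add_mulVec, sub_mulVec,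
      smul_mulVec, smul_mulVec, one_mulVec]
  simp only [sub_mulVec, add_mulVec]
  rw [houter]
  simp only [smul_mulVec, one_mulVec, mulVec_sub, hsq, dotProduct_sub, hdot]
  module

open scoped Matrix.Norms.Elementwise

section MatrixCurves

variable {t : ℝ}

theorem hasDerivAt_matrix_iff {m n : Type*} [Fintype n] {A : ℝ → Matrix m n ℝ}
    {A' : Matrix m n ℝ} :
    HasDerivAt A A' t ↔ ∀ i j, HasDerivAt (fun s => A s i j) (A' i j) t :=
  hasDerivAt_pi.trans (forall_congr' fun _ => hasDerivAt_pi)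

theorem HasDerivAt.matrix_mul {m n p : Type*} [Fintype n] [Fintype p] {A : ℝ → Matrix m n ℝ}
    {B : ℝ → Matrix n p ℝ} {A' : Matrix m n ℝ} {B' : Matrix n p ℝ} (hA : HasDerivAt A A' t)
    (hB : HasDerivAt B B' t) : HasDerivAt (fun s => A s * B s) (A' * B t + A t * B') t := by
  rw [hasDerivAt_matrix_iff] at *
  intro i j
  simp only [Matrix.add_apply, mul_apply, ← Finset.sum_add_distrib]
  exact HasDerivAt.fun_sum fun k _ => (hA i k).fun_mul (hB k j)

theorem HasDerivAt.matrix_transpose {m n : Type*} [Fintype m] [Fintype n] {A : ℝ → Matrix m n ℝ}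
    {A' : Matrix m n ℝ} (hA : HasDerivAt A A' t) : HasDerivAt (fun s => (A s)ᵀ) A'ᵀ t :=
  hasDerivAt_matrix_iff.2 fun i j => hasDerivAt_matrix_iff.1 hA j i

theorem HasDerivAt.matrix_trace {n : Type*} [Fintype n] {A : ℝ → Matrix n n ℝ}
    {A' : Matrix n n ℝ} (hA : HasDerivAt A A' t) : HasDerivAt (fun s => (A s).trace) A'.trace t :=
  HasDerivAt.fun_sum fun i _ => hasDerivAt_matrix_iff.1 hA i i

theorem HasDerivAt.matrix_mulVec {m n : Type*} [Fintype m] [Fintype n] {A : ℝ → Matrix m n ℝ}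
    {v : ℝ → n → ℝ} {A' : Matrix m n ℝ} {v' : n → ℝ} (hA : HasDerivAt A A' t)
    (hv : HasDerivAt v v' t) : HasDerivAt (fun s => A s *ᵥ v s) (A' *ᵥ v t + A t *ᵥ v') t := by
  refine hasDerivAt_pi.2 fun i => ?_
  simp only [Pi.add_apply, mulVec, dotProduct, ← Finset.sum_add_distrib]
  exact HasDerivAt.fun_sum fun j _ =>
    (hasDerivAt_matrix_iff.1 hA i j).fun_mul (hasDerivAt_pi.1 hv j)

theorem HasDerivAt.vee {A : ℝ → Matrix (Fin 3) (Fin 3) ℝ} {A' : Matrix (Fin 3) (Fin 3) ℝ}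
    (hA : HasDerivAt A A' t) : HasDerivAt (fun s => vee (A s)) (vee A') t :=
  hasDerivAt_pi.2 fun i => by fin_cases i <;> exact hasDerivAt_matrix_iff.1 hA _ _

end MatrixCurves

theorem hasDerivAt_attitudeError {Q : ℝ → Matrix (Fin 3) (Fin 3) ℝ}
    {Q' : Matrix (Fin 3) (Fin 3) ℝ} {t : ℝ} (hQ : HasDerivAt Q Q' t)
    (hg : 0 < 1 + (Q t).trace) :
    HasDerivAt (fun s => attitudeError (Q s))
      ((1 / (2 * √(1 + (Q t).trace))) • (vee (Q'ᵀ - Q') -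
        (Q'.trace / (2 * (1 + (Q t).trace))) • vee ((Q t)ᵀ - Q t))) t := by
  have hs : 0 < √(1 + (Q t).trace) := Real.sqrt_pos.2 hg
  have hsqrt : HasDerivAt (fun s => √(1 + (Q s).trace))
      (Q'.trace / (2 * √(1 + (Q t).trace))) t :=
    (hQ.matrix_trace.const_add 1).sqrt hg.ne'
  have hcoeff := (hsqrt.const_mul 2).inv (by positivity)
  simp only [← one_div] at hcoeff
  refine (hcoeff.smul (hQ.matrix_transpose.fun_sub hQ).vee).congr_deriv ?_
  have hsq : √(1 + (Q t).trace) ^ 2 = 1 + (Q t).trace := Real.sq_sqrt hg.le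
  simp only [Pi.div_apply, Pi.one_apply, smul_sub]
  match_scalars
  · ring
  · field_simp
    rw [hsq]

theorem hasDerivAt_transpose_mul_of_hat {R Rd : ℝ → Matrix (Fin 3) (Fin 3) ℝ} {w wd : Fin 3 → ℝ}
    {t : ℝ} (hR : HasDerivAt R (R t * hat w) t) (hRd : HasDerivAt Rd (Rd t * hat wd) t) :
    HasDerivAt (fun s => (R s)ᵀ * Rd s) (-hat w * ((R t)ᵀ * Rd t) + (R t)ᵀ * Rd t * hat wd) t := by
  convert hR.matrix_transpose.matrix_mul hRd using 1
  simp only [transpose_mul, hat_transpose, Matrix.neg_mul, Matrix.mul_assoc]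

section RigidBody

variable {R Rd : ℝ → Matrix (Fin 3) (Fin 3) ℝ} {Ω Ωd : ℝ → Fin 3 → ℝ} {t : ℝ}

theorem hasDerivAt_eR (hSO : R t ∈ specialOrthogonalGroup (Fin 3) ℝ)
    (hSOd : Rd t ∈ specialOrthogonalGroup (Fin 3) ℝ) (hR : HasDerivAt R (R t * hat (Ω t)) t)
    (hRd : HasDerivAt Rd (Rd t * hat (Ωd t)) t) (htr : -1 < ((Rd t)ᵀ * R t).trace) :
    HasDerivAt (eR R Rd) (β R Rd t *ᵥ eΩ R Rd Ω Ωd t) t := by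
  have hQ := transpose_mul_mem_specialOrthogonalGroup hSO hSOd
  have htrQ : ((Rd t)ᵀ * R t).trace = ((R t)ᵀ * Rd t).trace := by
    rw [← trace_transpose, transpose_mul, transpose_transpose]
  have hg : 0 < 1 + ((R t)ᵀ * Rd t).trace := by linarith
  have h := hasDerivAt_attitudeError (hasDerivAt_transpose_mul_of_hat hR hRd) hg
  rw [vee_sub_trace_smul_vee_eq_mulVec hQ hg] at h
  rw [show eR R Rd = _ from funext (eR_eq_attitudeError R Rd)]
  refine h.congr_deriv ?_
  rw [β, eΩ, htrQ, smul_mulVec, eR_eq_attitudeError]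

theorem hasDerivAt_Ωtar (P : Matrix (Fin 3) (Fin 3) ℝ) {Ωd' : Fin 3 → ℝ}
    (hSO : R t ∈ specialOrthogonalGroup (Fin 3) ℝ) (hSOd : Rd t ∈ specialOrthogonalGroup (Fin 3) ℝ)
    (hR : HasDerivAt R (R t * hat (Ω t)) t) (hRd : HasDerivAt Rd (Rd t * hat (Ωd t)) t)
    (hΩd : HasDerivAt Ωd Ωd' t) (htr : -1 < ((Rd t)ᵀ * R t).trace) :
    HasDerivAt (Ωtar P R Rd Ωd) (-((hat (Ω t) * ((R t)ᵀ * Rd t)) *ᵥ Ωd t) +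
      ((R t)ᵀ * Rd t) *ᵥ Ωd' - (P * β R Rd t) *ᵥ eΩ R Rd Ω Ωd t) t := by
  have hPeR := ((hasDerivAt_const t P).matrix_mulVec (hasDerivAt_eR hSO hSOd hR hRd htr)).fun_neg
  have hQΩd := (hasDerivAt_transpose_mul_of_hat hR hRd).matrix_mulVec hΩd
  refine (hPeR.fun_add hQΩd).congr_deriv ?_
  rw [zero_mulVec, zero_add, mulVec_mulVec, add_mulVec, ← mulVec_mulVec _ _ (hat (Ωd t)),
    hat_mulVec_self, mulVec_zero, add_zero, Matrix.neg_mul, neg_mulVec]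
  abel

end RigidBody

theorem backstepping_error_dynamics_general
    (R Rd : ℝ → Matrix (Fin 3) (Fin 3) ℝ) (Ω Ωd Ω' Ωd' : ℝ → Fin 3 → ℝ)
    (P F J : Matrix (Fin 3) (Fin 3) ℝ)
    (hSO : ∀ t, (R t)ᵀ * R t = 1 ∧ (R t).det = 1)
    (hSOd : ∀ t, (Rd t)ᵀ * Rd t = 1 ∧ (Rd t).det = 1)
    (hΩ : ∀ t i, HasDerivAt (fun s => Ω s i) (Ω' t i) t)
    (hΩd : ∀ t i, HasDerivAt (fun s => Ωd s i) (Ωd' t i) t)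
    (hR : ∀ t i j, HasDerivAt (fun s => R s i j) ((R t * hat (Ω t)) i j) t)
    (hRd : ∀ t i j, HasDerivAt (fun s => Rd s i j) ((Rd t * hat (Ωd t)) i j) t)
    (htr : ∀ t, -1 < ((Rd t)ᵀ * R t).trace) :
    (∀ t i, HasDerivAt (fun s => Ωtar P R Rd Ωd s i)
        ((-((hat (Ω t) * ((R t)ᵀ * Rd t)) *ᵥ Ωd t) + ((R t)ᵀ * Rd t) *ᵥ Ωd' t -
          (P * β R Rd t) *ᵥ eΩ R Rd Ω Ωd t) i) t) ∧
    ((∀ t, J *ᵥ Ω' t =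
        -(crossProduct (Ω t) (J *ᵥ Ω t)) +
          (crossProduct (Ω t) (J *ᵥ Ω t) +
            J *ᵥ (fun i => deriv (fun s => Ωtar P R Rd Ωd s i) t) -
            F *ᵥ (Ω t - Ωtar P R Rd Ωd t))) →
      ∀ t, J *ᵥ (fun i => deriv (fun s => Ω s i - Ωtar P R Rd Ωd s i) t) =
        -(F *ᵥ (Ω t - Ωtar P R Rd Ωd t))) := by
  have hSO3 (t : ℝ) : R t ∈ specialOrthogonalGroup (Fin 3) ℝ :=
    ⟨(mem_orthogonalGroup_iff' _ _).2 (hSO t).1, (hSO t).2⟩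
  have hSO3d (t : ℝ) : Rd t ∈ specialOrthogonalGroup (Fin 3) ℝ :=
    ⟨(mem_orthogonalGroup_iff' _ _).2 (hSOd t).1, (hSOd t).2⟩
  have hΩtar (t : ℝ) := hasDerivAt_pi.1 <| hasDerivAt_Ωtar P (hSO3 t) (hSO3d t)
    (hasDerivAt_matrix_iff.2 (hR t)) (hasDerivAt_matrix_iff.2 (hRd t))
    (hasDerivAt_pi.2 (hΩd t)) (htr t)
  refine ⟨hΩtar, fun hq t => ?_⟩
  have hderiv_e : (fun i => deriv (fun s => Ω s i - Ωtar P R Rd Ωd s i) t) =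
      Ω' t - fun i => deriv (fun s => Ωtar P R Rd Ωd s i) t :=
    funext fun i => ((hΩ t i).sub (hΩtar t i)).deriv.trans (congrArg _ (hΩtar t i).deriv.symm)
  rw [hderiv_e, mulVec_sub, hq t]
  abel

/-- Differentiability of `Ω_tar` with the stated derivative, and the linear tracking-error
dynamics `J e' = -F e` under the backstepping control law `q`. -/
theorem backstepping_error_dynamics
    (R Rd : ℝ → Matrix (Fin 3) (Fin 3) ℝ) (Ω Ωd Ω' Ωd' : ℝ → Fin 3 → ℝ)
    (P F J : Matrix (Fin 3) (Fin 3) ℝ) (hJ : IsUnit J)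
    (hSO : ∀ t, (R t)ᵀ * R t = 1 ∧ (R t).det = 1)
    (hSOd : ∀ t, (Rd t)ᵀ * Rd t = 1 ∧ (Rd t).det = 1)
    (hΩ : ∀ t i, HasDerivAt (fun s => Ω s i) (Ω' t i) t)
    (hΩd : ∀ t i, HasDerivAt (fun s => Ωd s i) (Ωd' t i) t)
    (hR : ∀ t i j, HasDerivAt (fun s => R s i j) ((R t * hat (Ω t)) i j) t)
    (hRd : ∀ t i j, HasDerivAt (fun s => Rd s i j) ((Rd t * hat (Ωd t)) i j) t)
    (htr : ∀ t, -1 < ((Rd t)ᵀ * R t).trace) :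
    (∀ t i, HasDerivAt (fun s => Ωtar P R Rd Ωd s i)
        ((-((hat (Ω t) * ((R t)ᵀ * Rd t)) *ᵥ Ωd t) + ((R t)ᵀ * Rd t) *ᵥ Ωd' t -
          (P * β R Rd t) *ᵥ eΩ R Rd Ω Ωd t) i) t) ∧
    ((∀ t, J *ᵥ Ω' t =
        -(crossProduct (Ω t) (J *ᵥ Ω t)) +
          (crossProduct (Ω t) (J *ᵥ Ω t) +
            J *ᵥ (fun i => deriv (fun s => Ωtar P R Rd Ωd s i) t) -
            F *ᵥ (Ω t - Ωtar P R Rd Ωd t))) →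
      ∀ t, J *ᵥ (fun i => deriv (fun s => Ω s i - Ωtar P R Rd Ωd s i) t) =
        -(F *ᵥ (Ω t - Ωtar P R Rd Ωd t))) :=
  backstepping_error_dynamics_general R Rd Ω Ωd Ω' Ωd' P F J hSO hSOd hΩ hΩd hR hRd htr
end
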